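/- Let V be a type, let H = ℓ²(V, ℂ) be the Hilbert space of square-summable functions f : V → ℂ with norm ‖f‖ = (∑_{v∈V} |f(v)|²)^{1/2}, let P ⊆ H be a finite-dimensional linear subspace, and let U ⊆ V. Then U is a uniqueness set for P (i.e., any two elements of P that agree at every point of U are equal) if and only if there exists a constant C > 0 such that for every f ∈ P the Plancherel–Polya inequalities (∑_{u∈U} |f(u)|²)^{1/2} ≤ ‖f‖ ≤ C·(∑_{u∈U} |f(u)|²)^{1/2} hold. -/

import Mathlib

open scoped ENNReal

/-!
Restriction to `U` is a linear map `ℓ²(V) → ℓ²(U)` of norm at most one, which is the left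
inequality. `U` is a uniqueness set for `P` exactly when this map is injective on `P`, and an
injective linear map on a finite-dimensional space is bounded below, which is the right inequality.
-/

theorem Memℓp.restrict {α : Type*} {E : α → Type*} [∀ i, NormedAddCommGroup (E i)]
    {p : ℝ≥0∞} {f : ∀ i, E i} (hf : Memℓp f p) (s : Set α) :
    Memℓp (fun i : s => f i) p := by
  obtain rfl | rfl | hp := p.trichotomy
  · exact memℓp_zero (hf.finite_dsupport.preimage Subtype.val_injective.injOn)
  · exact memℓp_infty
      (hf.bddAbove.mono (Set.range_comp_subset_range Subtype.val fun i => ‖f i‖))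
  · exact memℓp_gen ((hf.summable hp).subtype s)

namespace lp

variable {α : Type*} {E : α → Type*} [∀ i, NormedAddCommGroup (E i)] {p : ℝ≥0∞}

def restrict (s : Set α) (f : lp E p) : lp (fun i : s => E i) p :=
  ⟨fun i => f i, (lp.memℓp f).restrict s⟩

@[simp]
theorem restrict_apply (s : Set α) (f : lp E p) (i : s) : restrict s f i = f i := rfl

theorem restrict_eq_restrict_iff {s : Set α} {f g : lp E p} :
    restrict s f = restrict s g ↔ ∀ i ∈ s, f i = g i := by
  simp [lp.ext_iff, funext_iff]

theorem norm_restrict_le (hp : p ≠ 0) (s : Set α) (f : lp E p) : ‖restrict s f‖ ≤ ‖f‖ := by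
  obtain rfl | rfl | hp := p.trichotomy
  · exact absurd rfl hp
  · exact norm_le_of_forall_le (norm_nonneg' f) fun i => norm_apply_le_norm hp f i
  · refine norm_le_of_tsum_le hp (norm_nonneg' f) ?_
    rw [norm_rpow_eq_tsum hp f]
    exact ((lp.memℓp f).summable hp).tsum_subtype_le _ s fun i => by positivity

theorem norm_eq_sqrt_tsum (f : lp E 2) : ‖f‖ = √(∑' i, ‖f i‖ ^ 2) := by
  rw [norm_eq_tsum_rpow (by norm_num) f, Real.sqrt_eq_rpow]
  norm_num

variable {𝕜 : Type*} [NormedRing 𝕜] [∀ i, Module 𝕜 (E i)] [∀ i, IsBoundedSMul 𝕜 (E i)]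

variable (E p) in
@[simps]
def restrictₗ (s : Set α) : lp E p →ₗ[𝕜] lp (fun i : s => E i) p where
  toFun := restrict s
  map_add' _ _ := rfl
  map_smul' _ _ := rfl

end lp

theorem LinearMap.injOn_iff_exists_norm_le_mul_norm {𝕜 E F : Type*}
    [NontriviallyNormedField 𝕜] [CompleteSpace 𝕜] [NormedAddCommGroup E] [NormedSpace 𝕜 E]
    [NormedAddCommGroup F] [NormedSpace 𝕜 F] (f : E →ₗ[𝕜] F) (P : Submodule 𝕜 E)
    [FiniteDimensional 𝕜 P] :
    Set.InjOn f P ↔ ∃ C > 0, ∀ x ∈ P, ‖x‖ ≤ C * ‖f x‖ := by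
  rw [Set.injOn_iff_injective]
  change Function.Injective (f.domRestrict P) ↔ _
  rw [(f.domRestrict P).injective_iff_antilipschitz]
  constructor
  · rintro ⟨K, hK, hf⟩
    exact ⟨K, hK, fun x hx => ZeroHomClass.bound_of_antilipschitz _ hf ⟨x, hx⟩⟩
  · rintro ⟨C, hC, hf⟩
    exact ⟨⟨C, hC.le⟩, hC, AddMonoidHomClass.antilipschitz_of_bound (f.domRestrict P)
      fun x => hf x x.2⟩

theorem uniqueness_iff_plancherel_polya {V : Type*}
    (P : Submodule ℂ (lp (fun _ : V => ℂ) 2)) [FiniteDimensional ℂ P] (U : Set V) :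
    (∀ f ∈ P, ∀ g ∈ P, (∀ u ∈ U, (f : ∀ _ : V, ℂ) u = (g : ∀ _ : V, ℂ) u) → f = g) ↔
      ∃ C : ℝ, 0 < C ∧ ∀ f ∈ P,
        Real.sqrt (∑' u : U, ‖(f : ∀ _ : V, ℂ) u‖ ^ 2) ≤ ‖f‖ ∧
        ‖f‖ ≤ C * Real.sqrt (∑' u : U, ‖(f : ∀ _ : V, ℂ) u‖ ^ 2) := by
  have hnorm (f : lp (fun _ : V => ℂ) 2) :
      √(∑' u : U, ‖(f : ∀ _ : V, ℂ) u‖ ^ 2) = ‖lp.restrict U f‖ := by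
    rw [lp.norm_eq_sqrt_tsum]
    rfl
  have hinj := (lp.restrictₗ (𝕜 := ℂ) _ 2 U).injOn_iff_exists_norm_le_mul_norm P
  simp only [Set.InjOn, SetLike.mem_coe, lp.restrictₗ_apply, lp.restrict_eq_restrict_iff] at hinj
  simp only [hnorm, lp.norm_restrict_le two_ne_zero, true_and, ← gt_iff_lt]
  exact hinj
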